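/- arXiv:2509.03780 — 2 statements merged into one kernel-verified Lean document; each statement's English description precedes it below -/
import Mathlib

section
/- (Approximate Frankenstein rule) Let P be a distribution over X₁,…,Xₙ, and let G₁,…,G_m be DAGs all compatible with the ordering X₁,…,Xₙ, with D_KL(P || Πᵢ P[Xᵢ|X_{pa_{Gⱼ}(i)}]) ≤ εⱼ for each j. For any function σ: {1,…,n} → {1,…,m}, the Frankenstein DAG assigning Xᵢ the parents pa_{G_{σ(i)}}(i) satisfies D_KL(P || Πᵢ P[Xᵢ|X_{pa_{G_{σ(i)}}(i)}]) ≤ Σⱼ εⱼ. -/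
open scoped Classical BigOperators

noncomputable section

/-- Marginal probability that coordinates in `S` take the values `x` takes. -/
def margin {n : ℕ} {α : Fin n → Type*} [∀ i, Fintype (α i)]
    (P : (∀ i, α i) → ℝ) (S : Finset (Fin n)) (x : ∀ i, α i) : ℝ :=
  ∑ y, if ∀ i ∈ S, y i = x i then P y else 0

/-- Conditional probability of coordinate `i` given the coordinates in `pa`. -/
def condP {n : ℕ} {α : Fin n → Type*} [∀ i, Fintype (α i)]
    (P : (∀ i, α i) → ℝ) (i : Fin n) (pa : Finset (Fin n)) (x : ∀ i, α i) : ℝ :=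
  margin P (insert i pa) x / margin P pa x

/-- `D_KL(P ‖ Πᵢ P[Xᵢ | X_{pa(i)}])`: the error with which `P` satisfies the DAG
with parent function `pa`. -/
def klFact {n : ℕ} {α : Fin n → Type*} [∀ i, Fintype (α i)]
    (P : (∀ i, α i) → ℝ) (pa : Fin n → Finset (Fin n)) : ℝ :=
  ∑ x, P x * Real.log (P x / ∏ i, condP P i (pa i) x)

namespace Frank

variable {n : ℕ} {α : Fin n → Type*} [∀ i, Fintype (α i)]
variable {P : (∀ i, α i) → ℝ}

lemma margin_nonneg (hP0 : ∀ x, 0 ≤ P x) (S : Finset (Fin n)) (x : ∀ i, α i) :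
    0 ≤ margin P S x := by
  refine Finset.sum_nonneg fun y _ => ?_
  by_cases h : ∀ i ∈ S, y i = x i
  · rw [if_pos h]; exact hP0 y
  · rw [if_neg h]

lemma self_le_margin (hP0 : ∀ x, 0 ≤ P x) (S : Finset (Fin n)) (x : ∀ i, α i) :
    P x ≤ margin P S x := by
  have h := Finset.single_le_sum
    (f := fun y => if ∀ i ∈ S, y i = x i then P y else 0)
    (fun y _ => by
      show (0:ℝ) ≤ if ∀ i ∈ S, y i = x i then P y else 0
      by_cases hy : ∀ i ∈ S, y i = x i
      · rw [if_pos hy]; exact hP0 y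
      · rw [if_neg hy]) (Finset.mem_univ x)
  simpa [margin] using h

lemma margin_pos (hP0 : ∀ x, 0 ≤ P x) {x : ∀ i, α i} (hx : 0 < P x)
    (S : Finset (Fin n)) : 0 < margin P S x :=
  lt_of_lt_of_le hx (self_le_margin hP0 S x)

lemma condP_pos (hP0 : ∀ x, 0 ≤ P x) {x : ∀ i, α i} (hx : 0 < P x)
    (i : Fin n) (S : Finset (Fin n)) : 0 < condP P i S x :=
  div_pos (margin_pos hP0 hx _) (margin_pos hP0 hx _)

lemma margin_congr {S : Finset (Fin n)} {x x' : ∀ i, α i}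
    (h : ∀ k ∈ S, x k = x' k) : margin P S x = margin P S x' := by
  refine Finset.sum_congr rfl fun y _ => ?_
  refine if_congr ?_ rfl rfl
  constructor
  · intro hy k hk; rw [hy k hk]; exact h k hk
  · intro hy k hk; rw [hy k hk]; exact (h k hk).symm

lemma margin_univ (x : ∀ i, α i) : margin P Finset.univ x = P x := by
  unfold margin
  rw [Finset.sum_eq_single x]
  · simp
  · intro y _ hy; rw [if_neg]; intro h; exact hy (funext fun i => h i (Finset.mem_univ i))
  · simp

lemma margin_sum_update {S : Finset (Fin n)} {i : Fin n} (hi : i ∉ S) (x : ∀ i, α i) :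
    ∑ v : α i, margin P (insert i S) (Function.update x i v) = margin P S x := by
  unfold margin
  rw [Finset.sum_comm]
  refine Finset.sum_congr rfl fun y _ => ?_
  have hcond : ∀ v : α i,
      (∀ k ∈ insert i S, y k = Function.update x i v k) ↔
        (y i = v ∧ ∀ k ∈ S, y k = x k) := by
    intro v
    constructor
    · intro h
      refine ⟨by simpa using h i (Finset.mem_insert_self i S), fun k hk => ?_⟩
      have hne : k ≠ i := fun e => hi (e ▸ hk)
      have := h k (Finset.mem_insert_of_mem hk)
      rwa [Function.update_of_ne hne] at this
    · rintro ⟨h1, h2⟩ k hk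
      rcases Finset.mem_insert.1 hk with rfl | hk
      · simpa using h1
      · have hne : k ≠ i := fun e => hi (e ▸ hk)
        rw [Function.update_of_ne hne]; exact h2 k hk
  have hite : ∀ v : α i,
      (if ∀ k ∈ insert i S, y k = Function.update x i v k then P y else 0)
        = if y i = v ∧ ∀ k ∈ S, y k = x k then P y else 0 :=
    fun v => if_congr (hcond v) rfl rfl
  simp only [hite]
  by_cases hC : ∀ k ∈ S, y k = x k
  · rw [if_pos hC]
    have h2 : ∀ v : α i,
        (if y i = v ∧ ∀ k ∈ S, y k = x k then P y else 0) = if y i = v then P y else 0 :=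
      fun v => if_congr (and_iff_left hC) rfl rfl
    simp only [h2]
    simp [Finset.sum_ite_eq]
  · rw [if_neg hC]
    have h2 : ∀ v : α i,
        (if y i = v ∧ ∀ k ∈ S, y k = x k then P y else 0) = 0 :=
      fun v => if_neg (fun hv => hC hv.2)
    simp only [h2]
    simp

lemma prod_condP_Iio (hP0 : ∀ x, 0 ≤ P x) (hP1 : ∑ y, P y = 1)
    {x : ∀ i, α i} (hx : 0 < P x) :
    ∏ i, condP P i (Finset.Iio i) x = P x := by
  have key : ∀ k : ℕ,
      margin P (Finset.univ.filter (fun j : Fin n => (j : ℕ) < k)) x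
        = ∏ i ∈ Finset.univ.filter (fun j : Fin n => (j : ℕ) < k),
            condP P i (Finset.Iio i) x := by
    intro k
    induction k with
    | zero => simp [margin, hP1]
    | succ k ih =>
      by_cases hk : k < n
      · set i : Fin n := ⟨k, hk⟩ with hidef
        have hfilt : Finset.univ.filter (fun j : Fin n => (j : ℕ) < k) = Finset.Iio i := by
          ext j; simp only [Finset.mem_filter, Finset.mem_univ, true_and, Finset.mem_Iio, Fin.lt_def, hidef, Fin.val_mk]
        have hfilt2 : Finset.univ.filter (fun j : Fin n => (j : ℕ) < k + 1)
            = insert i (Finset.Iio i) := by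
          ext j
          simp only [Finset.mem_filter, Finset.mem_univ, true_and, Finset.mem_insert,
            Finset.mem_Iio, Fin.lt_def, Fin.ext_iff, hidef, Fin.val_mk]
          omega
        have hpos : margin P (Finset.Iio i) x ≠ 0 :=
          ne_of_gt (margin_pos hP0 hx _)
        rw [hfilt2, Finset.prod_insert (by simp), ← hfilt, ← ih, hfilt]
        unfold condP
        rw [div_mul_cancel₀ _ hpos]
      · have hfilt : Finset.univ.filter (fun j : Fin n => (j : ℕ) < k + 1)
            = Finset.univ.filter (fun j : Fin n => (j : ℕ) < k) := by
          ext j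
          simp only [Finset.mem_filter, Finset.mem_univ, true_and]
          have := j.isLt; omega
        rw [hfilt]; exact ih
  have h := key n
  rw [show Finset.univ.filter (fun j : Fin n => (j : ℕ) < n) = Finset.univ from by
      ext j; simp [j.isLt]] at h
  rw [margin_univ] at h
  exact h.symm


set_option maxHeartbeats 1000000 in
lemma sum_ratio_le_one (hP0 : ∀ x, 0 ≤ P x) (hP1 : ∑ y, P y = 1)
    {i : Fin n} {S : Finset (Fin n)} (hS : S ⊆ Finset.Iio i) :
    ∑ x, P x * (condP P i S x / condP P i (Finset.Iio i) x) ≤ 1 := by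
  set I := Finset.Iio i with hIdef
  have hiI : i ∉ I := by simp [hIdef]
  have hiS : i ∉ S := fun h => hiI (hS h)
  have stepA : ∀ x, P x * (condP P i S x / condP P i I x)
      = (P x * margin P (insert i S) x / (margin P S x * margin P (insert i I) x))
          * margin P I x := by
    intro x
    rcases eq_or_lt_of_le (hP0 x) with h | h
    · rw [← h]; ring
    · have h1 := ne_of_gt (margin_pos hP0 h S)
      have h2 := ne_of_gt (margin_pos hP0 h I)
      have h3 := ne_of_gt (margin_pos hP0 h (insert i I))
      unfold condP
      field_simp
  simp only [stepA]
  have mul_margin : ∀ (c : ℝ) (T : Finset (Fin n)) (z : ∀ j, α j),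
      c * margin P T z = ∑ y, if ∀ k ∈ T, y k = z k then c * P y else 0 := by
    intro c T z
    rw [margin, Finset.mul_sum]
    exact Finset.sum_congr rfl fun y _ => by rw [mul_ite, mul_zero]
  have expand : ∀ x, (P x * margin P (insert i S) x /
        (margin P S x * margin P (insert i I) x)) * margin P I x
      = ∑ y, if ∀ k ∈ I, y k = x k then
          (P x * margin P (insert i S) x / (margin P S x * margin P (insert i I) x)) * P y
        else 0 :=
    fun x => mul_margin _ I x
  simp only [expand]
  rw [Finset.sum_comm]
  have hbound : ∀ y : ∀ j, α j,
      (∑ x, if ∀ k ∈ I, y k = x k then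
        (P x * margin P (insert i S) x / (margin P S x * margin P (insert i I) x)) * P y
        else 0) ≤ P y := by
    intro y
    rcases eq_or_lt_of_le (hP0 y) with hy | hy
    · rw [← hy]
      refine le_of_eq (Finset.sum_eq_zero fun x _ => ?_)
      by_cases hcnd : ∀ k ∈ I, y k = x k
      · rw [if_pos hcnd, mul_zero]
      · rw [if_neg hcnd]
    · have hMSy := margin_pos hP0 hy S
      have h1 : ∀ x, (if ∀ k ∈ I, y k = x k then
          (P x * margin P (insert i S) x / (margin P S x * margin P (insert i I) x)) * P y
          else 0)
          = (if ∀ k ∈ I, y k = x k then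
            (P y / margin P S y) * (P x * margin P (insert i S) x / margin P (insert i I) x)
            else 0) := by
        intro x
        by_cases hcnd : ∀ k ∈ I, y k = x k
        · rw [if_pos hcnd, if_pos hcnd]
          have hMS : margin P S x = margin P S y :=
            margin_congr fun k hk => (hcnd k (hS hk)).symm
          rw [hMS]
          rcases eq_or_lt_of_le (hP0 x) with hx | hx
          · rw [← hx]; ring
          · have hT := ne_of_gt (margin_pos hP0 hx (insert i I))
            field_simp
        · rw [if_neg hcnd, if_neg hcnd]
      simp only [h1]
      rw [show (∑ x, if ∀ k ∈ I, y k = x k then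
            (P y / margin P S y) * (P x * margin P (insert i S) x / margin P (insert i I) x)
            else 0)
          = (P y / margin P S y) * ∑ x, if ∀ k ∈ I, y k = x k then
            (P x * margin P (insert i S) x / margin P (insert i I) x) else 0 from by
        rw [Finset.mul_sum]
        exact Finset.sum_congr rfl fun x _ => by rw [mul_ite, mul_zero]]
      have hinner : (∑ x, if ∀ k ∈ I, y k = x k then
          (P x * margin P (insert i S) x / margin P (insert i I) x) else 0)
          ≤ margin P S y := by
        have step1 : ∀ x : ∀ j, α j, (if ∀ k ∈ I, y k = x k then
            (P x * margin P (insert i S) x / margin P (insert i I) x) else 0)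
            = ∑ v : α i, if (∀ k ∈ insert i I, x k = Function.update y i v k) then
                (P x * margin P (insert i S) x / margin P (insert i I) x) else 0 := by
          intro x
          have hsingle : (∑ v : α i, if (∀ k ∈ insert i I, x k = Function.update y i v k) then
              (P x * margin P (insert i S) x / margin P (insert i I) x) else 0)
              = (if (∀ k ∈ insert i I, x k = Function.update y i (x i) k) then
                (P x * margin P (insert i S) x / margin P (insert i I) x) else 0) := by
            refine Finset.sum_eq_single_of_mem (x i) (Finset.mem_univ _) fun v _ hv => ?_
            rw [if_neg]
            intro hcc
            have : x i = v := (hcc i (Finset.mem_insert_self i I)).trans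
              (Function.update_self i v y)
            exact hv this.symm
          rw [hsingle]
          refine (if_congr ?_ rfl rfl).symm
          constructor
          · intro h k hk
            have hne : k ≠ i := fun e => hiI (e ▸ hk)
            have := h k (Finset.mem_insert_of_mem hk)
            rw [Function.update_of_ne hne] at this
            exact this.symm
          · intro h k hk
            rcases Finset.mem_insert.1 hk with rfl | hk
            · rw [Function.update_self]
            · have hne : k ≠ i := fun e => hiI (e ▸ hk)
              rw [Function.update_of_ne hne]
              exact (h k hk).symm
        simp only [step1]
        rw [Finset.sum_comm]
        have step2 : ∀ v : α i, (∑ x, if (∀ k ∈ insert i I, x k = Function.update y i v k) then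
            (P x * margin P (insert i S) x / margin P (insert i I) x) else 0)
            ≤ margin P (insert i S) (Function.update y i v) := by
          intro v
          set yv := Function.update y i v with hyv
          have step3 : ∀ x : ∀ j, α j, (if (∀ k ∈ insert i I, x k = yv k) then
              (P x * margin P (insert i S) x / margin P (insert i I) x) else 0)
              = (if (∀ k ∈ insert i I, x k = yv k) then P x else 0)
                  * (margin P (insert i S) yv / margin P (insert i I) yv) := by
            intro x
            by_cases hcnd : ∀ k ∈ insert i I, x k = yv k
            · rw [if_pos hcnd, if_pos hcnd]
              have e1 : margin P (insert i S) x = margin P (insert i S) yv :=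
                margin_congr fun k hk => hcnd k (by
                  rcases Finset.mem_insert.1 hk with rfl | hk
                  · exact Finset.mem_insert_self _ _
                  · exact Finset.mem_insert_of_mem (hS hk))
              have e2 : margin P (insert i I) x = margin P (insert i I) yv :=
                margin_congr fun k hk => hcnd k hk
              rw [e1, e2]; ring
            · rw [if_neg hcnd, if_neg hcnd, zero_mul]
          simp only [step3]
          rw [← Finset.sum_mul]
          have e3 : (∑ x, if (∀ k ∈ insert i I, x k = yv k) then P x else 0)
              = margin P (insert i I) yv := rfl
          rw [e3]
          rcases eq_or_lt_of_le (margin_nonneg hP0 (insert i I) yv) with hm | hm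
          · rw [← hm, zero_mul]; exact margin_nonneg hP0 _ _
          · rw [← mul_div_assoc, mul_div_cancel_left₀ _ (ne_of_gt hm)]
        calc (∑ v : α i, ∑ x, if (∀ k ∈ insert i I, x k = Function.update y i v k) then
              (P x * margin P (insert i S) x / margin P (insert i I) x) else 0)
            ≤ ∑ v : α i, margin P (insert i S) (Function.update y i v) :=
              Finset.sum_le_sum fun v _ => step2 v
          _ = margin P S y := margin_sum_update hiS y
      calc (P y / margin P S y) * (∑ x, if ∀ k ∈ I, y k = x k then
            (P x * margin P (insert i S) x / margin P (insert i I) x) else 0)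
          ≤ (P y / margin P S y) * margin P S y :=
            mul_le_mul_of_nonneg_left hinner (div_nonneg hy.le hMSy.le)
        _ = P y := div_mul_cancel₀ _ (ne_of_gt hMSy)
  calc (∑ y : ∀ j, α j, ∑ x, if ∀ k ∈ I, y k = x k then
        (P x * margin P (insert i S) x / (margin P S x * margin P (insert i I) x)) * P y
        else 0)
      ≤ ∑ y, P y := Finset.sum_le_sum fun y _ => hbound y
    _ = 1 := hP1

lemma D_nonneg (hP0 : ∀ x, 0 ≤ P x) (hP1 : ∑ y, P y = 1)
    {i : Fin n} {S : Finset (Fin n)} (hS : S ⊆ Finset.Iio i) :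
    0 ≤ ∑ x, P x * Real.log (condP P i (Finset.Iio i) x / condP P i S x) := by
  have h1 : ∀ x, P x - P x * (condP P i S x / condP P i (Finset.Iio i) x)
      ≤ P x * Real.log (condP P i (Finset.Iio i) x / condP P i S x) := by
    intro x
    rcases eq_or_lt_of_le (hP0 x) with h | h
    · rw [← h]; simp
    · have hcS := condP_pos hP0 h i S
      have hcI := condP_pos hP0 h i (Finset.Iio i)
      have hlog := Real.log_le_sub_one_of_pos (div_pos hcS hcI)
      have hrw : Real.log (condP P i (Finset.Iio i) x / condP P i S x)
          = - Real.log (condP P i S x / condP P i (Finset.Iio i) x) := by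
        rw [← Real.log_inv, inv_div]
      rw [hrw]
      nlinarith [mul_le_mul_of_nonneg_left hlog h.le]
  have h2 := sum_ratio_le_one hP0 hP1 hS
  have h3 := Finset.sum_le_sum fun x (_ : x ∈ Finset.univ) => h1 x
  rw [Finset.sum_sub_distrib, hP1] at h3
  linarith

lemma klFact_eq (hP0 : ∀ x, 0 ≤ P x) (hP1 : ∑ y, P y = 1) (pa : Fin n → Finset (Fin n)) :
    klFact P pa
      = ∑ i, ∑ x, P x * Real.log (condP P i (Finset.Iio i) x / condP P i (pa i) x) := by
  rw [Finset.sum_comm]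
  unfold klFact
  refine Finset.sum_congr rfl fun x _ => ?_
  rcases eq_or_lt_of_le (hP0 x) with h | h
  · rw [← h]; simp
  · rw [← Finset.mul_sum]
    congr 1
    have hne : ∀ (j : Fin n) (S : Finset (Fin n)), condP P j S x ≠ 0 :=
      fun j S => ne_of_gt (condP_pos hP0 h j S)
    conv_lhs => rw [← prod_condP_Iio hP0 hP1 h]
    rw [← Finset.prod_div_distrib,
      Real.log_prod fun j _ => div_ne_zero (hne j _) (hne j _)]

end Frank

/-- Approximate Frankenstein rule: if `P` satisfies each DAG `Gⱼ` (all compatible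
with the ordering `X₁,…,Xₙ`) to within `εⱼ`, then for any choice function `σ`,
the Frankenstein DAG taking the parents of `Xᵢ` from `G_{σ(i)}` is satisfied to
within `Σⱼ εⱼ`. -/
theorem frankenstein_approx
    {n m : ℕ} {α : Fin n → Type*} [∀ i, Fintype (α i)]
    (P : (∀ i, α i) → ℝ) (hP0 : ∀ x, 0 ≤ P x) (hP1 : ∑ x, P x = 1)
    (pa : Fin m → Fin n → Finset (Fin n))
    (hc : ∀ j i, ∀ k ∈ pa j i, k < i)
    (ε : Fin m → ℝ)
    (hε : ∀ j, klFact P (pa j) ≤ ε j)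
    (σ : Fin n → Fin m) :
    klFact P (fun i => pa (σ i) i) ≤ ∑ j, ε j := by
  have hsub : ∀ (j : Fin m) (i : Fin n), pa j i ⊆ Finset.Iio i :=
    fun j i k hk => Finset.mem_Iio.2 (hc j i k hk)
  calc klFact P (fun i => pa (σ i) i)
      = ∑ i, ∑ x, P x * Real.log (condP P i (Finset.Iio i) x / condP P i (pa (σ i) i) x) :=
        Frank.klFact_eq hP0 hP1 _
    _ ≤ ∑ i, ∑ j, ∑ x, P x * Real.log (condP P i (Finset.Iio i) x / condP P i (pa j i) x) :=
        Finset.sum_le_sum fun i _ =>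
          Finset.single_le_sum
            (f := fun j => ∑ x, P x *
              Real.log (condP P i (Finset.Iio i) x / condP P i (pa j i) x))
            (fun j _ => Frank.D_nonneg hP0 hP1 (hsub j i)) (Finset.mem_univ (σ i))
    _ = ∑ j, ∑ i, ∑ x, P x * Real.log (condP P i (Finset.Iio i) x / condP P i (pa j i) x) :=
        Finset.sum_comm
    _ = ∑ j, klFact P (pa j) :=
        Finset.sum_congr rfl fun j _ => (Frank.klFact_eq hP0 hP1 (pa j)).symm
    _ ≤ ∑ j, ε j := Finset.sum_le_sum fun j _ => hε j
end
end

section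
/- (Dangly Bit Lemma) Suppose H(Y|X) ≤ ε, and suppose D_KL(P[X,Z] || Q[X,Z]) ≤ ε' where Q is the factored distribution specified by some Bayes net D over X and auxiliary variables Z. Then D_KL(P[X,Y,Z] || Q[X,Z]·P[Y|X]) ≤ ε + ε'. -/
open scoped Classical BigOperators

noncomputable section

/-- Probability of an event under a mass function `p` on a finite sample space. -/
def prob {Ω : Type*} [Fintype Ω] (p : Ω → ℝ) (E : Ω → Prop) : ℝ :=
  ∑ ω, if E ω then p ω else 0

/-- KL divergence between two mass functions on a finite type. -/
def KL {γ : Type*} [Fintype γ] (P Q : γ → ℝ) : ℝ :=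
  ∑ z, P z * Real.log (P z / Q z)

/-- Conditional Shannon entropy H(Y|X). -/
def condEnt {Ω α β : Type*} [Fintype Ω] [Fintype α] [Fintype β]
    (p : Ω → ℝ) (X : Ω → α) (Y : Ω → β) : ℝ :=
  -∑ x, ∑ y, prob p (fun ω => X ω = x ∧ Y ω = y) *
      Real.log (prob p (fun ω => X ω = x ∧ Y ω = y) / prob p (fun ω => X ω = x))

section helpers
variable {Ω : Type*} [Fintype Ω]

lemma prob_nonneg (p : Ω → ℝ) (hp : ∀ ω, 0 ≤ p ω) (E : Ω → Prop) : 0 ≤ prob p E := by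
  unfold prob
  apply Finset.sum_nonneg
  intro ω _
  split
  · exact hp ω
  · exact le_rfl

lemma prob_mono (p : Ω → ℝ) (hp : ∀ ω, 0 ≤ p ω) {E F : Ω → Prop} (h : ∀ ω, E ω → F ω) :
    prob p E ≤ prob p F := by
  unfold prob
  apply Finset.sum_le_sum
  intro ω _
  by_cases hE : E ω
  · rw [if_pos hE, if_pos (h ω hE)]
  · rw [if_neg hE]
    split
    · exact hp ω
    · exact le_rfl

lemma prob_congr (p : Ω → ℝ) {E F : Ω → Prop} (h : ∀ ω, E ω ↔ F ω) : prob p E = prob p F :=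
  Finset.sum_congr rfl fun ω _ => if_congr (h ω) rfl rfl

lemma prob_fiber {β : Type*} [Fintype β] (p : Ω → ℝ) (E : Ω → Prop) (f : Ω → β) :
    ∑ b, prob p (fun ω => E ω ∧ f ω = b) = prob p E := by
  unfold prob
  rw [Finset.sum_comm]
  refine Finset.sum_congr rfl fun ω _ => ?_
  by_cases h : E ω
  · simp [h]
  · simp [h]

end helpers

lemma dangly_core {α β γ : Type*} [Fintype α] [Fintype β] [Fintype γ]
    (A : α → β → γ → ℝ) (B : α → γ → ℝ) (C : α → β → ℝ) (D : α → ℝ) (Q : α × γ → ℝ)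
    (hA0 : ∀ x y z, 0 ≤ A x y z)
    (hB0 : ∀ x z, 0 ≤ B x z) (hC0 : ∀ x y, 0 ≤ C x y)
    (hAB : ∀ x y z, A x y z ≤ B x z) (hAC : ∀ x y z, A x y z ≤ C x y)
    (hCD : ∀ x y, C x y ≤ D x)
    (hsumY : ∀ x z, ∑ y, A x y z = B x z)
    (hsumZ : ∀ x y, ∑ z, A x y z = C x y)
    (hQ0 : ∀ t, 0 ≤ Q t)
    (hQsupp : ∀ x z, B x z ≠ 0 → Q (x, z) ≠ 0)
    (ε ε' : ℝ)
    (hY : -∑ x, ∑ y, C x y * Real.log (C x y / D x) ≤ ε)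
    (hD : ∑ x, ∑ z, B x z * Real.log (B x z / Q (x, z)) ≤ ε') :
    ∑ x, ∑ y, ∑ z, A x y z * Real.log (A x y z / (Q (x, z) * (C x y / D x))) ≤ ε + ε' := by
  have key : ∀ x y z,
      A x y z * Real.log (A x y z / (Q (x, z) * (C x y / D x)))
      = A x y z * Real.log (A x y z / B x z)
        + A x y z * Real.log (B x z / Q (x, z))
        + A x y z * Real.log (D x / C x y) := by
    intro x y z
    by_cases ha : A x y z = 0
    · simp [ha]
    · have haP : 0 < A x y z := lt_of_le_of_ne (hA0 x y z) (Ne.symm ha)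
      have hbP : 0 < B x z := lt_of_lt_of_le haP (hAB x y z)
      have hcP : 0 < C x y := lt_of_lt_of_le haP (hAC x y z)
      have hdP : 0 < D x := lt_of_lt_of_le hcP (hCD x y)
      have hqP : 0 < Q (x, z) := lt_of_le_of_ne (hQ0 (x, z)) (Ne.symm (hQsupp x z hbP.ne'))
      rw [← mul_add, ← mul_add]
      congr 1
      rw [Real.log_div ha (by positivity), Real.log_div ha hbP.ne',
        Real.log_div hbP.ne' hqP.ne', Real.log_div hdP.ne' hcP.ne',
        Real.log_mul hqP.ne' (by positivity)]
      rw [Real.log_div hcP.ne' hdP.ne']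
      ring
  calc (∑ x, ∑ y, ∑ z, A x y z * Real.log (A x y z / (Q (x, z) * (C x y / D x))))
      = (∑ x, ∑ y, ∑ z, A x y z * Real.log (A x y z / B x z))
        + (∑ x, ∑ y, ∑ z, A x y z * Real.log (B x z / Q (x, z)))
        + (∑ x, ∑ y, ∑ z, A x y z * Real.log (D x / C x y)) := by
        rw [← Finset.sum_add_distrib, ← Finset.sum_add_distrib]
        refine Finset.sum_congr rfl fun x _ => ?_
        rw [← Finset.sum_add_distrib, ← Finset.sum_add_distrib]
        refine Finset.sum_congr rfl fun y _ => ?_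
        rw [← Finset.sum_add_distrib, ← Finset.sum_add_distrib]
        exact Finset.sum_congr rfl fun z _ => key x y z
    _ ≤ 0 + ε' + ε := by
        gcongr ?_ + ?_ + ?_
        · apply Finset.sum_nonpos; intro x _
          apply Finset.sum_nonpos; intro y _
          apply Finset.sum_nonpos; intro z _
          apply mul_nonpos_of_nonneg_of_nonpos (hA0 x y z)
          apply Real.log_nonpos (div_nonneg (hA0 x y z) (hB0 x z))
          exact div_le_one_of_le₀ (hAB x y z) (hB0 x z)
        · have heq : (∑ x, ∑ y, ∑ z, A x y z * Real.log (B x z / Q (x, z)))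
              = ∑ x, ∑ z, B x z * Real.log (B x z / Q (x, z)) := by
            refine Finset.sum_congr rfl fun x _ => ?_
            rw [Finset.sum_comm]
            refine Finset.sum_congr rfl fun z _ => ?_
            rw [← Finset.sum_mul, hsumY]
          rw [heq]
          exact hD
        · have h1 : (∑ x, ∑ y, ∑ z, A x y z * Real.log (D x / C x y))
              = ∑ x, ∑ y, C x y * Real.log (D x / C x y) := by
            refine Finset.sum_congr rfl fun x _ => ?_
            refine Finset.sum_congr rfl fun y _ => ?_
            rw [← Finset.sum_mul, hsumZ]
          have h2 : (∑ x, ∑ y, C x y * Real.log (D x / C x y))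
              = -∑ x, ∑ y, C x y * Real.log (C x y / D x) := by
            rw [← Finset.sum_neg_distrib]
            refine Finset.sum_congr rfl fun x _ => ?_
            rw [← Finset.sum_neg_distrib]
            refine Finset.sum_congr rfl fun y _ => ?_
            by_cases hc : C x y = 0
            · simp [hc]
            · have hcP : 0 < C x y := lt_of_le_of_ne (hC0 x y) (Ne.symm hc)
              have hdP : 0 < D x := lt_of_lt_of_le hcP (hCD x y)
              rw [Real.log_div hdP.ne' hc, Real.log_div hc hdP.ne']
              ring
          rw [h1, h2]
          exact hY
    _ = ε + ε' := by ring

/-- Dangly Bit Lemma: if `H(Y|X) ≤ ε` and `D_KL(P[X,Z] ‖ Q[X,Z]) ≤ ε'`, then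
appending `Y` as a child of `X` gives `D_KL(P[X,Y,Z] ‖ Q[X,Z]·P[Y|X]) ≤ ε + ε'`. -/
theorem dangly_bit
    {Ω α β γ : Type*} [Fintype Ω] [Fintype α] [Fintype β] [Fintype γ]
    (p : Ω → ℝ) (hp : ∀ ω, 0 ≤ p ω) (hsum : ∑ ω, p ω = 1)
    (X : Ω → α) (Y : Ω → β) (Z : Ω → γ)
    (Q : α × γ → ℝ) (hQ0 : ∀ t, 0 ≤ Q t) (hQ1 : ∑ t, Q t = 1)
    (hQsupp : ∀ x z, prob p (fun ω => X ω = x ∧ Z ω = z) ≠ 0 → Q (x, z) ≠ 0)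
    (ε ε' : ℝ)
    (hY : condEnt p X Y ≤ ε)
    (hD : KL (fun t : α × γ => prob p (fun ω => X ω = t.1 ∧ Z ω = t.2)) Q ≤ ε') :
    KL
      (fun t : α × β × γ => prob p (fun ω => X ω = t.1 ∧ Y ω = t.2.1 ∧ Z ω = t.2.2))
      (fun t : α × β × γ =>
        Q (t.1, t.2.2) *
          (prob p (fun ω => X ω = t.1 ∧ Y ω = t.2.1) / prob p (fun ω => X ω = t.1)))
      ≤ ε + ε' := by
  classical
  simp only [KL, Fintype.sum_prod_type] at hD ⊢
  simp only [condEnt] at hY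
  refine dangly_core
    (fun x y z => prob p (fun ω => X ω = x ∧ Y ω = y ∧ Z ω = z))
    (fun x z => prob p (fun ω => X ω = x ∧ Z ω = z))
    (fun x y => prob p (fun ω => X ω = x ∧ Y ω = y))
    (fun x => prob p (fun ω => X ω = x)) Q
    (fun x y z => prob_nonneg p hp _)
    (fun x z => prob_nonneg p hp _)
    (fun x y => prob_nonneg p hp _)
    (fun x y z => prob_mono p hp fun ω h => ⟨h.1, h.2.2⟩)
    (fun x y z => prob_mono p hp fun ω h => ⟨h.1, h.2.1⟩)
    (fun x y => prob_mono p hp fun ω h => h.1)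
    ?_ ?_ hQ0 hQsupp ε ε' hY hD
  · intro x z
    rw [← prob_fiber p (fun ω => X ω = x ∧ Z ω = z) Y]
    exact Finset.sum_congr rfl fun y _ => prob_congr p fun ω => by tauto
  · intro x y
    rw [← prob_fiber p (fun ω => X ω = x ∧ Y ω = y) Z]
    exact Finset.sum_congr rfl fun z _ => prob_congr p fun ω => by tauto
end
end
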